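/- Define S̃₀^ε = {ρ_{RMM'} : ∃ channel N_{M→Q} with P(N(tr_{M'} ρ), Ψ⁺_{RQ}) ≤ ε} and S̃₁^ε analogously with M and M' exchanged, where P is the purified distance and Ψ⁺ the maximally entangled two-qubit state. If ε < √3/4, then S̃₀^ε ∩ S̃₁^ε = ∅. -/

import Mathlib

open Matrix
open scoped Classical ComplexOrder

noncomputable def binEnt (x : ℝ) : ℝ := -x * Real.logb 2 x - (1 - x) * Real.logb 2 (1 - x)

/-- von Neumann entropy (base 2) of a matrix, via eigenvalues (0 if not Hermitian). -/
noncomputable def vnEnt {d : Type*} [Fintype d] [DecidableEq d] (ρ : Matrix d d ℂ) : ℝ :=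
  if h : ρ.IsHermitian then ∑ i, -(h.eigenvalues i) * Real.logb 2 (h.eigenvalues i) else 0

/-- Trace norm of a Hermitian matrix (0 if not Hermitian). -/
noncomputable def traceNorm {d : Type*} [Fintype d] [DecidableEq d] (A : Matrix d d ℂ) : ℝ :=
  if h : A.IsHermitian then ∑ i, |h.eigenvalues i| else 0

noncomputable def fidelity {d : Type*} [Fintype d] [DecidableEq d] (ρ σ : Matrix d d ℂ) : ℝ :=
  if hσ : σ.PosSemidef then
    if h : (((hσ.1.eigenvectorUnitary : Matrix d d ℂ) *
        diagonal (fun i => ((Real.sqrt (hσ.1.eigenvalues i) : ℝ) : ℂ)) *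
        (star (hσ.1.eigenvectorUnitary : Matrix d d ℂ))) * ρ *
        ((hσ.1.eigenvectorUnitary : Matrix d d ℂ) *
        diagonal (fun i => ((Real.sqrt (hσ.1.eigenvalues i) : ℝ) : ℂ)) *
        (star (hσ.1.eigenvectorUnitary : Matrix d d ℂ)))).IsHermitian then
      ∑ i, Real.sqrt (h.eigenvalues i) else 0
  else 0

noncomputable def pdist {d : Type*} [Fintype d] [DecidableEq d] (ρ σ : Matrix d d ℂ) : ℝ :=
  Real.sqrt (1 - (fidelity ρ σ) ^ 2)

def IsState {d : Type*} [Fintype d] [DecidableEq d] (ρ : Matrix d d ℂ) : Prop :=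
  ρ.PosSemidef ∧ ρ.trace = 1

/-- partial trace over the second tensor factor -/
noncomputable def ptraceR {a b : Type*} [Fintype b] (ρ : Matrix (a × b) (a × b) ℂ) : Matrix a a ℂ :=
  fun i j => ∑ k, ρ (i, k) (j, k)

/-- partial trace over the first tensor factor -/
noncomputable def ptraceL {a b : Type*} [Fintype a] (ρ : Matrix (a × b) (a × b) ℂ) : Matrix b b ℂ :=
  fun i j => ∑ k, ρ (k, i) (k, j)

/-- conditional von Neumann entropy H(A|B) of a state on A × B -/
noncomputable def condEnt {a b : Type*} [Fintype a] [Fintype b] [DecidableEq a] [DecidableEq b]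
    (ρ : Matrix (a × b) (a × b) ℂ) : ℝ := vnEnt ρ - vnEnt (ptraceL ρ)

/-- computational-basis projector on a qubit -/
noncomputable def Pc (b : Fin 2) : Matrix (Fin 2) (Fin 2) ℂ := fun i j => if i = b ∧ j = b then 1 else 0

/-- Hadamard-basis projector on a qubit -/
noncomputable def Ph (b : Fin 2) : Matrix (Fin 2) (Fin 2) ℂ :=
  fun i j => (1 / 2 : ℂ) * (-1) ^ ((i : ℕ) * (b : ℕ)) * (-1) ^ ((b : ℕ) * (j : ℕ))

/-- measure the first (qubit) factor with rank-one projectors `P`, storing the outcome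
classically in its place -/
noncomputable def cqMeasure {m : Type*} [Fintype m] (P : Fin 2 → Matrix (Fin 2) (Fin 2) ℂ)
    (ρ : Matrix (Fin 2 × m) (Fin 2 × m) ℂ) : Matrix (Fin 2 × m) (Fin 2 × m) ℂ :=
  fun zi z'j => if zi.1 = z'j.1 then ∑ r, ∑ t, (P zi.1) r t * ρ (t, zi.2) (r, z'j.2) else 0

/-- outer product |ψ⟩⟨ψ| of a vector -/
noncomputable def outer {d : Type*} (ψ : d → ℂ) : Matrix d d ℂ := fun i j => ψ i * (starRingEnd ℂ) (ψ j)

/-- the maximally entangled state `|Φ⁺⟩ = (|00⟩+|11⟩)/√2` of two qubits, as a density matrix. -/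
noncomputable def PhiRQ : Matrix (Fin 2 × Fin 2) (Fin 2 × Fin 2) ℂ :=
  outer (fun p => if p.1 = p.2 then ((Real.sqrt 2 : ℝ) : ℂ)⁻¹ else 0)

/-- trace out the third subsystem of a state on `R ⊗ M ⊗ M'` -/
noncomputable def trThird {dM dM' : ℕ} (ρ : Matrix (Fin 2 × Fin dM × Fin dM') (Fin 2 × Fin dM × Fin dM') ℂ) :
    Matrix (Fin 2 × Fin dM) (Fin 2 × Fin dM) ℂ :=
  fun p q => ∑ k, ρ (p.1, p.2, k) (q.1, q.2, k)

/-- trace out the second subsystem of a state on `R ⊗ M ⊗ M'` -/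
noncomputable def trSecond {dM dM' : ℕ} (ρ : Matrix (Fin 2 × Fin dM × Fin dM') (Fin 2 × Fin dM × Fin dM') ℂ) :
    Matrix (Fin 2 × Fin dM') (Fin 2 × Fin dM') ℂ :=
  fun p q => ∑ e, ρ (p.1, e, p.2) (q.1, e, q.2)

/-- apply a channel, given by Kraus operators `K i : M → Q`, to the second factor of a
state on `R ⊗ M`. -/
noncomputable def applyKraus {dM k : ℕ} (K : Fin k → Matrix (Fin 2) (Fin dM) ℂ)
    (τ : Matrix (Fin 2 × Fin dM) (Fin 2 × Fin dM) ℂ) :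
    Matrix (Fin 2 × Fin 2) (Fin 2 × Fin 2) ℂ :=
  fun p p' => ∑ i, ∑ m, ∑ m', K i p.2 m * τ (p.1, m) (p'.1, m') * (starRingEnd ℂ) (K i p'.2 m')

/-- `S̃₀^ε`: states on `R ⊗ M ⊗ M'` from which the maximally entangled state between `R`
and a qubit can be recovered, up to purified distance `ε`, by a channel acting on `M` alone. -/
def recovSet0 {dM dM' : ℕ} (ε : ℝ) : Set (Matrix (Fin 2 × Fin dM × Fin dM') (Fin 2 × Fin dM × Fin dM') ℂ) :=
  {ρ | IsState ρ ∧ ∃ (k : ℕ) (K : Fin k → Matrix (Fin 2) (Fin dM) ℂ),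
    (∑ i, (K i)ᴴ * K i = 1) ∧ pdist (applyKraus K (trThird ρ)) PhiRQ ≤ ε}

/-- `S̃₁^ε`: same with recovery acting on `M'` alone. -/
def recovSet1 {dM dM' : ℕ} (ε : ℝ) : Set (Matrix (Fin 2 × Fin dM × Fin dM') (Fin 2 × Fin dM × Fin dM') ℂ) :=
  {ρ | IsState ρ ∧ ∃ (k : ℕ) (K : Fin k → Matrix (Fin 2) (Fin dM') ℂ),
    (∑ i, (K i)ᴴ * K i = 1) ∧ pdist (applyKraus K (trSecond ρ)) PhiRQ ≤ ε}

/-!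
Both recovery channels act on different subsystems, so they can be applied simultaneously:
`ω = (N_{M→Q} ⊗ N'_{M'→Q'})(ρ)` is a three-qubit state on `R Q Q'` whose `RQ` and `RQ'` marginals
are the two recovered states. Since `Φ⁺` is pure, purified distance at most `ε < 1` from it means
`⟨Φ⁺|σ|Φ⁺⟩ ≥ 1 - ε²`. Monogamy of entanglement, in the form of the operator inequality
`Φ⁺_{RQ} ⊗ 1 + Φ⁺_{RQ'} ⊗ 1 ≤ 3/2`, then gives `2 (1 - ε²) ≤ 3/2`, i.e. `ε ≥ 1/2 > √3/4`.
-/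

section Spectral

variable {n : Type*} [Fintype n] [DecidableEq n] {A : Matrix n n ℂ}

lemma Matrix.IsHermitian.eigenvalues_eq_zero_or_eq (hA : A.IsHermitian) {c : ℝ}
    (h : A * A = c • A) (i : n) : hA.eigenvalues i = 0 ∨ hA.eigenvalues i = c := by
  set v := ⇑(hA.eigenvectorBasis i)
  have hv : v ≠ 0 := fun h0 => hA.eigenvectorBasis.orthonormal.ne_zero i
    (by simpa [v] using congrArg (WithLp.toLp 2) h0)
  have hAv := hA.mulVec_eigenvectorBasis i
  have key : (hA.eigenvalues i * hA.eigenvalues i) • v = (c * hA.eigenvalues i) • v := by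
    calc (hA.eigenvalues i * hA.eigenvalues i) • v = A *ᵥ (A *ᵥ v) := by
          rw [hAv, mulVec_smul, hAv, smul_smul]
      _ = (c * hA.eigenvalues i) • v := by
          rw [mulVec_mulVec, h, smul_mulVec, hAv, smul_smul]
  have := smul_left_injective ℝ hv key
  simp only [mul_eq_mul_right_iff] at this
  tauto

lemma Matrix.IsHermitian.sqrt_eq_self_of_mul_self (hA : A.IsHermitian) (h : A * A = A) :
    (hA.eigenvectorUnitary : Matrix n n ℂ) *
      diagonal (fun i => ((Real.sqrt (hA.eigenvalues i) : ℝ) : ℂ)) *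
      star (hA.eigenvectorUnitary : Matrix n n ℂ) = A := by
  have hsqrt : (fun i => ((Real.sqrt (hA.eigenvalues i) : ℝ) : ℂ)) =
      RCLike.ofReal ∘ hA.eigenvalues := by
    funext i
    rcases hA.eigenvalues_eq_zero_or_eq (c := 1) (by rwa [one_smul]) i with h | h <;> simp [h]
  rw [hsqrt]
  simpa [Unitary.conjStarAlgAut_apply] using hA.spectral_theorem.symm

lemma Matrix.IsHermitian.sq_sum_sqrt_eigenvalues (hA : A.IsHermitian)
    (h : A * A = A.trace • A) :
    (∑ i, Real.sqrt (hA.eigenvalues i)) ^ 2 = max (∑ i, hA.eigenvalues i) 0 := by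
  set r := ∑ i, hA.eigenvalues i
  have htr : A.trace = (r : ℂ) := by simp [r, hA.trace_eq_sum_eigenvalues]
  have heig := hA.eigenvalues_eq_zero_or_eq (c := r) (by rw [h, htr, Complex.coe_smul])
  rcases le_or_gt r 0 with hr | hr
  · have : ∀ i, Real.sqrt (hA.eigenvalues i) = 0 := fun i =>
      Real.sqrt_eq_zero'.mpr ((heig i).elim le_of_eq (· ▸ hr))
    simp [this, hr]
  · have hsq : ∀ i, Real.sqrt (hA.eigenvalues i) = hA.eigenvalues i / Real.sqrt r := fun i => by
      rcases heig i with h | h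
      · simp [h]
      · rw [h, Real.div_sqrt]
    rw [Finset.sum_congr rfl fun i _ => hsq i, ← Finset.sum_div, div_pow, Real.sq_sqrt hr.le,
      max_eq_left hr.le, sq, mul_div_cancel_right₀ _ hr.ne']

end Spectral

section PureState

variable {d : Type*} [Fintype d]

lemma outer_posSemidef [DecidableEq d] (ψ : d → ℂ) : (outer ψ).PosSemidef :=
  posSemidef_vecMulVec_self_star ψ

lemma trace_outer (ψ : d → ℂ) : (outer ψ).trace = star ψ ⬝ᵥ ψ := by
  simp [Matrix.trace, outer, dotProduct, mul_comm]

lemma outer_mul_mul_outer (ψ : d → ℂ) (σ : Matrix d d ℂ) :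
    outer ψ * σ * outer ψ = (star ψ ⬝ᵥ σ *ᵥ ψ) • outer ψ := by
  ext i j
  simp only [outer, mul_apply, Matrix.smul_apply, smul_eq_mul, dotProduct, mulVec, Pi.star_apply,
    RCLike.star_def, Finset.sum_mul, Finset.mul_sum]
  rw [Finset.sum_comm]
  exact Finset.sum_congr rfl fun _ _ => Finset.sum_congr rfl fun _ _ => by ring

lemma outer_mul_outer_self [DecidableEq d] {ψ : d → ℂ} (hψ : star ψ ⬝ᵥ ψ = 1) :
    outer ψ * outer ψ = outer ψ := by
  simpa [hψ] using outer_mul_mul_outer ψ 1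

variable [DecidableEq d]

/-- With `P = |ψ⟩⟨ψ|` we have `√P = P` and `P σ P = ⟨ψ|σ|ψ⟩ P`, so the fidelity is the square root
of the overlap when that is real and nonnegative, and the junk value `0` otherwise. -/
lemma sq_fidelity_outer_le (σ : Matrix d d ℂ) {ψ : d → ℂ} (hψ : star ψ ⬝ᵥ ψ = 1) :
    fidelity σ (outer ψ) ^ 2 ≤ max (star ψ ⬝ᵥ σ *ᵥ ψ).re 0 := by
  set c := star ψ ⬝ᵥ σ *ᵥ ψ
  have hP := outer_posSemidef ψ
  unfold fidelity
  simp only [dif_pos hP, hP.1.sqrt_eq_self_of_mul_self (outer_mul_outer_self hψ),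
    outer_mul_mul_outer]
  split_ifs with hB
  · have htr : (c • outer ψ).trace = c := by
      rw [trace_smul, trace_outer, hψ, smul_eq_mul, mul_one]
    have hsum : ∑ i, hB.eigenvalues i = c.re := by
      have := congrArg Complex.re (htr ▸ hB.trace_eq_sum_eigenvalues)
      rw [Complex.re_sum] at this
      simpa using this.symm
    have hsq : c • outer ψ * c • outer ψ = (c • outer ψ).trace • c • outer ψ := by
      rw [htr, smul_mul_smul_comm, outer_mul_outer_self hψ, smul_smul]
    rw [hB.sq_sum_sqrt_eigenvalues hsq, hsum]
  · simp

lemma one_sub_sq_le_sq_fidelity_of_pdist_le {σ τ : Matrix d d ℂ} {ε : ℝ} (h : pdist σ τ ≤ ε) :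
    1 - ε ^ 2 ≤ fidelity σ τ ^ 2 := by
  rcases le_or_gt (1 - fidelity σ τ ^ 2) 0 with h0 | h0
  · nlinarith
  · have := pow_le_pow_left₀ (Real.sqrt_nonneg (1 - fidelity σ τ ^ 2)) h 2
    rw [Real.sq_sqrt h0.le] at this
    linarith

lemma one_sub_sq_le_re_of_pdist_outer_le {σ : Matrix d d ℂ} {ψ : d → ℂ}
    (hψ : star ψ ⬝ᵥ ψ = 1) {ε : ℝ} (h : pdist σ (outer ψ) ≤ ε) (hε : ε < 1) :
    1 - ε ^ 2 ≤ (star ψ ⬝ᵥ σ *ᵥ ψ).re := by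
  have hε0 : 0 ≤ ε := (Real.sqrt_nonneg _).trans h
  have := (one_sub_sq_le_sq_fidelity_of_pdist_le h).trans (sq_fidelity_outer_le σ hψ)
  rcases le_max_iff.mp this with h1 | h1
  · exact h1
  · nlinarith

end PureState

section Kraus

variable {ι m n : Type*} [Fintype ι] [Fintype m] [Fintype n] [DecidableEq n]
  {K : ι → Matrix m n ℂ}

lemma trace_sum_mul_mul_conjTranspose (hK : ∑ i, (K i)ᴴ * K i = 1) (G : Matrix n n ℂ) :
    (∑ i, K i * G * (K i)ᴴ).trace = G.trace := by
  simp_rw [trace_sum, trace_mul_cycle _ G, ← trace_sum, ← Finset.sum_mul, hK, one_mul]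

lemma sum_mul_mul_star_eq_trace (hK : ∑ i, (K i)ᴴ * K i = 1) (G : Matrix n n ℂ) :
    ∑ c, ∑ i, ∑ x, ∑ y, K i c x * G x y * star (K i c y) = G.trace := by
  rw [← trace_sum_mul_mul_conjTranspose hK G]
  simp only [Matrix.trace, diag, Matrix.sum_apply, Matrix.mul_apply, conjTranspose_apply,
    Finset.sum_mul]
  exact Finset.sum_congr rfl fun c _ => Finset.sum_congr rfl fun i _ => Finset.sum_comm

end Kraus

section LocalChannels

open Kronecker

variable {dM dM' e k : ℕ}

noncomputable def applyKrausSecond (K : Fin k → Matrix (Fin e) (Fin dM) ℂ)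
    (X : Matrix (Fin 2 × Fin dM × Fin dM') (Fin 2 × Fin dM × Fin dM') ℂ) :
    Matrix (Fin 2 × Fin e × Fin dM') (Fin 2 × Fin e × Fin dM') ℂ :=
  let L i := (1 : Matrix (Fin 2) (Fin 2) ℂ) ⊗ₖ (K i ⊗ₖ (1 : Matrix (Fin dM') (Fin dM') ℂ))
  ∑ i, L i * X * (L i)ᴴ

noncomputable def applyKrausThird (K : Fin k → Matrix (Fin e) (Fin dM') ℂ)
    (X : Matrix (Fin 2 × Fin dM × Fin dM') (Fin 2 × Fin dM × Fin dM') ℂ) :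
    Matrix (Fin 2 × Fin dM × Fin e) (Fin 2 × Fin dM × Fin e) ℂ :=
  let L i := (1 : Matrix (Fin 2) (Fin 2) ℂ) ⊗ₖ ((1 : Matrix (Fin dM) (Fin dM) ℂ) ⊗ₖ K i)
  ∑ i, L i * X * (L i)ᴴ

lemma applyKrausSecond_apply (K : Fin k → Matrix (Fin e) (Fin dM) ℂ)
    (X : Matrix (Fin 2 × Fin dM × Fin dM') (Fin 2 × Fin dM × Fin dM') ℂ)
    (a a' : Fin 2) (b b' : Fin e) (c c' : Fin dM') :
    applyKrausSecond K X (a, b, c) (a', b', c') =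
      ∑ i, ∑ m, ∑ n, K i b m * X (a, m, c) (a', n, c') * star (K i b' n) := by
  simp only [applyKrausSecond, Matrix.sum_apply, Matrix.mul_apply, conjTranspose_apply,
    kroneckerMap_apply, Matrix.one_apply, Fintype.sum_prod_type, ite_mul, mul_ite, zero_mul,
    mul_zero, one_mul, mul_one, Finset.sum_ite_irrel, Finset.sum_const_zero, Finset.sum_ite_eq,
    Finset.mem_univ, if_true, apply_ite (star : ℂ → ℂ), star_zero, Finset.sum_mul]
  exact Finset.sum_congr rfl fun _ _ => Finset.sum_comm

lemma applyKrausThird_apply (K : Fin k → Matrix (Fin e) (Fin dM') ℂ)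
    (X : Matrix (Fin 2 × Fin dM × Fin dM') (Fin 2 × Fin dM × Fin dM') ℂ)
    (a a' : Fin 2) (b b' : Fin dM) (c c' : Fin e) :
    applyKrausThird K X (a, b, c) (a', b', c') =
      ∑ i, ∑ m, ∑ n, K i c m * X (a, b, m) (a', b', n) * star (K i c' n) := by
  simp only [applyKrausThird, Matrix.sum_apply, Matrix.mul_apply, conjTranspose_apply,
    kroneckerMap_apply, Matrix.one_apply, Fintype.sum_prod_type, ite_mul, mul_ite, zero_mul,
    mul_zero, one_mul, Finset.sum_ite_irrel, Finset.sum_const_zero, Finset.sum_ite_eq,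
    Finset.mem_univ, if_true, apply_ite (star : ℂ → ℂ), star_zero, Finset.sum_mul]
  exact Finset.sum_congr rfl fun _ _ => Finset.sum_comm

lemma posSemidef_applyKrausSecond (K : Fin k → Matrix (Fin e) (Fin dM) ℂ)
    {X : Matrix (Fin 2 × Fin dM × Fin dM') (Fin 2 × Fin dM × Fin dM') ℂ} (hX : X.PosSemidef) :
    (applyKrausSecond K X).PosSemidef :=
  posSemidef_sum _ fun _ _ => hX.mul_mul_conjTranspose_same _

lemma posSemidef_applyKrausThird (K : Fin k → Matrix (Fin e) (Fin dM') ℂ)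
    {X : Matrix (Fin 2 × Fin dM × Fin dM') (Fin 2 × Fin dM × Fin dM') ℂ} (hX : X.PosSemidef) :
    (applyKrausThird K X).PosSemidef :=
  posSemidef_sum _ fun _ _ => hX.mul_mul_conjTranspose_same _

lemma trThird_applyKrausSecond (K : Fin k → Matrix (Fin 2) (Fin dM) ℂ)
    (X : Matrix (Fin 2 × Fin dM × Fin dM') (Fin 2 × Fin dM × Fin dM') ℂ) :
    trThird (applyKrausSecond K X) = applyKraus K (trThird X) := by
  ext ⟨a, b⟩ ⟨a', b'⟩
  simp only [trThird, applyKraus, applyKrausSecond_apply, Finset.mul_sum, Finset.sum_mul]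
  rw [Finset.sum_comm]
  refine Finset.sum_congr rfl fun i _ => ?_
  rw [Finset.sum_comm]
  exact Finset.sum_congr rfl fun m _ => Finset.sum_comm

lemma trThird_applyKrausThird {K : Fin k → Matrix (Fin e) (Fin dM') ℂ}
    (hK : ∑ i, (K i)ᴴ * K i = 1)
    (X : Matrix (Fin 2 × Fin dM × Fin dM') (Fin 2 × Fin dM × Fin dM') ℂ) :
    trThird (applyKrausThird K X) = trThird X := by
  ext ⟨a, b⟩ ⟨a', b'⟩
  simp only [trThird, applyKrausThird_apply]
  exact sum_mul_mul_star_eq_trace hK (fun m n => X (a, b, m) (a', b', n))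

lemma trSecond_applyKrausSecond {K : Fin k → Matrix (Fin e) (Fin dM) ℂ}
    (hK : ∑ i, (K i)ᴴ * K i = 1)
    (X : Matrix (Fin 2 × Fin dM × Fin dM') (Fin 2 × Fin dM × Fin dM') ℂ) :
    trSecond (applyKrausSecond K X) = trSecond X := by
  ext ⟨a, c⟩ ⟨a', c'⟩
  simp only [trSecond, applyKrausSecond_apply]
  exact sum_mul_mul_star_eq_trace hK (fun m n => X (a, m, c) (a', n, c'))

lemma trSecond_applyKrausThird (K : Fin k → Matrix (Fin 2) (Fin dM') ℂ)
    (X : Matrix (Fin 2 × Fin dM × Fin dM') (Fin 2 × Fin dM × Fin dM') ℂ) :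
    trSecond (applyKrausThird K X) = applyKraus K (trSecond X) := by
  ext ⟨a, c⟩ ⟨a', c'⟩
  simp only [trSecond, applyKraus, applyKrausThird_apply, Finset.mul_sum, Finset.sum_mul]
  rw [Finset.sum_comm]
  refine Finset.sum_congr rfl fun i _ => ?_
  rw [Finset.sum_comm]
  exact Finset.sum_congr rfl fun m _ => Finset.sum_comm

lemma trace_trThird (X : Matrix (Fin 2 × Fin dM × Fin dM') (Fin 2 × Fin dM × Fin dM') ℂ) :
    (trThird X).trace = X.trace := by
  simp [Matrix.trace, trThird, Fintype.sum_prod_type]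

lemma trace_trSecond (X : Matrix (Fin 2 × Fin dM × Fin dM') (Fin 2 × Fin dM × Fin dM') ℂ) :
    (trSecond X).trace = X.trace := by
  simp only [Matrix.trace, diag, trSecond, Fintype.sum_prod_type]
  exact Finset.sum_congr rfl fun _ _ => Finset.sum_comm

lemma exists_isState_trThird_trSecond_eq_applyKraus {k' : ℕ}
    {K : Fin k → Matrix (Fin 2) (Fin dM) ℂ} (hK : ∑ i, (K i)ᴴ * K i = 1)
    {K' : Fin k' → Matrix (Fin 2) (Fin dM') ℂ} (hK' : ∑ j, (K' j)ᴴ * K' j = 1)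
    {ρ : Matrix (Fin 2 × Fin dM × Fin dM') (Fin 2 × Fin dM × Fin dM') ℂ} (hρ : IsState ρ) :
    ∃ ω : Matrix (Fin 2 × Fin 2 × Fin 2) (Fin 2 × Fin 2 × Fin 2) ℂ, IsState ω ∧
      trThird ω = applyKraus K (trThird ρ) ∧ trSecond ω = applyKraus K' (trSecond ρ) := by
  refine ⟨applyKrausSecond K (applyKrausThird K' ρ),
    ⟨posSemidef_applyKrausSecond K (posSemidef_applyKrausThird K' hρ.1), ?_⟩, ?_, ?_⟩
  · rw [← trace_trSecond, trSecond_applyKrausSecond hK, trace_trSecond, ← trace_trThird,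
      trThird_applyKrausThird hK', trace_trThird, hρ.2]
  · rw [trThird_applyKrausSecond, trThird_applyKrausThird hK']
  · rw [trSecond_applyKrausSecond hK, trSecond_applyKrausThird]

end LocalChannels

section Monogamy

noncomputable def phiPlus : Fin 2 × Fin 2 → ℂ :=
  fun p => if p.1 = p.2 then ((Real.sqrt 2 : ℝ) : ℂ)⁻¹ else 0

lemma PhiRQ_eq_outer : PhiRQ = outer phiPlus := rfl

lemma inv_sqrt_two_mul_self :
    ((Real.sqrt 2 : ℝ) : ℂ)⁻¹ * ((Real.sqrt 2 : ℝ) : ℂ)⁻¹ = 1 / 2 := by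
  rw [← mul_inv, ← Complex.ofReal_mul, Real.mul_self_sqrt zero_le_two]
  norm_num

lemma star_phiPlus_dotProduct_mulVec (X : Matrix (Fin 2 × Fin 2) (Fin 2 × Fin 2) ℂ) :
    star phiPlus ⬝ᵥ X *ᵥ phiPlus = (∑ a, ∑ b, X (a, a) (b, b)) / 2 := by
  simp only [dotProduct, Pi.star_apply, phiPlus, RCLike.star_def, mulVec, mul_ite, mul_zero,
    Fintype.sum_prod_type, Finset.sum_ite_eq, Finset.mem_univ, ↓reduceIte, Fin.sum_univ_two,
    Fin.isValue, map_inv₀, Complex.conj_ofReal, zero_ne_one, map_zero, zero_mul, add_zero,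
    one_ne_zero, zero_add]
  linear_combination (X (0, 0) (0, 0) + X (0, 0) (1, 1) + X (1, 1) (0, 0) + X (1, 1) (1, 1)) *
    inv_sqrt_two_mul_self

lemma star_phiPlus_dotProduct_self : star phiPlus ⬝ᵥ phiPlus = 1 := by
  simpa [Fin.sum_univ_two] using star_phiPlus_dotProduct_mulVec 1

/-- Together with `monogamyCoeff`, an `LDLᴴ` factorization of
`3/2 · 1 - Φ⁺_{RQ} ⊗ 1_{Q'} - Φ⁺_{RQ'} ⊗ 1_Q` on `R ⊗ Q ⊗ Q'`
(the pivots at `|110⟩` and `|111⟩` vanish). -/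
noncomputable def monogamyVec : Fin 6 → Fin 2 × Fin 2 × Fin 2 → ℂ :=
  ![Pi.single (0, 0, 0) 1 - Pi.single (1, 0, 1) 1 - Pi.single (1, 1, 0) 1,
    Pi.single (0, 0, 1) 1 - Pi.single (1, 1, 1) (1 / 2),
    Pi.single (0, 1, 0) 1 - Pi.single (1, 1, 1) (1 / 2),
    Pi.single (0, 1, 1) 1,
    Pi.single (1, 0, 0) 1,
    Pi.single (1, 0, 1) 1 - Pi.single (1, 1, 0) 1]

noncomputable def monogamyCoeff : Fin 6 → ℝ := ![1 / 2, 1, 1, 3 / 2, 3 / 2, 1 / 2]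

lemma three_halves_mul_trace_sub_eq_sum_monogamyCoeff
    (ω : Matrix (Fin 2 × Fin 2 × Fin 2) (Fin 2 × Fin 2 × Fin 2) ℂ) :
    3 / 2 * ω.trace - star phiPlus ⬝ᵥ trThird ω *ᵥ phiPlus
        - star phiPlus ⬝ᵥ trSecond ω *ᵥ phiPlus
      = ∑ k, (monogamyCoeff k : ℂ) * (star (monogamyVec k) ⬝ᵥ ω *ᵥ monogamyVec k) := by
  simp only [trace, diag_apply, Fintype.sum_prod_type, Fin.sum_univ_succ, Fin.isValue,
    Finset.univ_unique, Fin.default_eq_zero, Finset.sum_singleton, Fin.succ_zero_eq_one,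
    star_phiPlus_dotProduct_mulVec, trThird, trSecond, monogamyCoeff, one_div, monogamyVec,
    cons_val_zero, Complex.ofReal_inv, Complex.ofReal_ofNat, star_sub, Pi.star_single, star_one,
    mulVec_sub, mulVec_single, MulOpposite.op_one, one_smul, dotProduct_sub, sub_dotProduct,
    single_dotProduct, col_apply, one_mul, cons_val_succ, Complex.ofReal_one, star_inv₀, star_ofNat,
    MulOpposite.op_inv, MulOpposite.op_ofNat, dotProduct_smul, MulOpposite.smul_eq_mul_unop,
    MulOpposite.unop_inv, MulOpposite.unop_ofNat, Complex.ofReal_div, cons_val_fin_one,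
    Finset.sum_const, Finset.card_singleton]
  ring

lemma re_phiPlus_trThird_add_re_phiPlus_trSecond_le
    {ω : Matrix (Fin 2 × Fin 2 × Fin 2) (Fin 2 × Fin 2 × Fin 2) ℂ} (hω : IsState ω) :
    (star phiPlus ⬝ᵥ trThird ω *ᵥ phiPlus).re + (star phiPlus ⬝ᵥ trSecond ω *ᵥ phiPlus).re
      ≤ 3 / 2 := by
  have h : 0 ≤ 3 / 2 * ω.trace - star phiPlus ⬝ᵥ trThird ω *ᵥ phiPlus
      - star phiPlus ⬝ᵥ trSecond ω *ᵥ phiPlus := by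
    rw [three_halves_mul_trace_sub_eq_sum_monogamyCoeff]
    refine Finset.sum_nonneg fun k _ => mul_nonneg (Complex.zero_le_real.mpr ?_)
      (hω.1.dotProduct_mulVec_nonneg _)
    fin_cases k <;> norm_num [monogamyCoeff]
  have := (Complex.nonneg_iff.mp h).1
  simp only [hω.2, Complex.sub_re, mul_one] at this
  norm_num at this
  linarith

end Monogamy

/-- if `ε < √3/4` then `S̃₀^ε ∩ S̃₁^ε = ∅`. -/
theorem recovSet0_inter_recovSet1_empty (dM dM' : ℕ) (ε : ℝ) (hε : ε < Real.sqrt 3 / 4) :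
    (recovSet0 (dM := dM) (dM' := dM') ε) ∩ recovSet1 ε = ∅ := by
  refine Set.eq_empty_of_forall_notMem ?_
  rintro ρ ⟨⟨hρ, k, K, hK, h0⟩, -, k', K', hK', h1⟩
  obtain ⟨ω, hω, hω0, hω1⟩ := exists_isState_trThird_trSecond_eq_applyKraus hK hK' hρ
  rw [← hω0, PhiRQ_eq_outer] at h0
  rw [← hω1, PhiRQ_eq_outer] at h1
  have hε_half : ε < 1 / 2 :=
    hε.trans (by nlinarith [Real.sq_sqrt zero_le_three, Real.sqrt_nonneg 3])
  have hε0 : 0 ≤ ε := (Real.sqrt_nonneg _).trans h0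
  have f0 := one_sub_sq_le_re_of_pdist_outer_le star_phiPlus_dotProduct_self h0 (by linarith)
  have f1 := one_sub_sq_le_re_of_pdist_outer_le star_phiPlus_dotProduct_self h1 (by linarith)
  have := re_phiPlus_trThird_add_re_phiPlus_trSecond_le hω
  nlinarith
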